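/- Let x ∈ ℤ^{L+1} and let x' be obtained from x by x'_f = x_f − 1, x'_t = x_t + 1, x'_k = x_k otherwise, where x_f ≥ x_t + 2. Then the imbalance index of x' (after sorting) is strictly smaller than that of x: κ(x') = κ(x) − 2(s − l) < κ(x), where l < s are the descending-order ranks of positions f and t respectively. -/
import Mathlib

noncomputable def sortDesc {n : ℕ} (x : Fin n → ℤ) : Fin n → ℤ :=
  fun i => x (Tuple.sort x (Fin.rev i))

noncomputable def kappa {n : ℕ} (x : Fin n → ℤ) : ℤ :=
  ∑ i : Fin n, ∑ j : Fin n, if i < j then sortDesc x i - sortDesc x j else 0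

private lemma aux1 (a b : ℤ) : |a - 1 - b| = |a - b| + (2 * (if a ≤ b then (1:ℤ) else 0) - 1) := by
  rcases le_or_gt a b with h | h
  · rw [if_pos h, abs_of_nonpos (by omega), abs_of_nonpos (by omega)]; ring
  · rw [if_neg (not_le.mpr h), abs_of_nonneg (by omega), abs_of_nonneg (by omega)]; ring

private lemma aux2 (a b : ℤ) : |a + 1 - b| = |a - b| + (1 - 2 * (if a < b then (1:ℤ) else 0)) := by
  rcases lt_or_ge a b with h | h
  · rw [if_pos h, abs_of_nonpos (by omega), abs_of_nonpos (by omega)]; ring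
  · rw [if_neg (not_lt.mpr h), abs_of_nonneg (by omega), abs_of_nonneg (by omega)]; ring

private lemma sortDesc_anti {n : ℕ} (x : Fin n → ℤ) : Antitone (sortDesc x) := by
  intro i j hij
  exact Tuple.monotone_sort x (Fin.rev_le_rev.mpr hij)

private lemma two_kappa {n : ℕ} (x : Fin n → ℤ) :
    2 * kappa x = ∑ i : Fin n, ∑ j : Fin n, |x i - x j| := by
  have hanti := sortDesc_anti x
  have key : ∀ i j : Fin n, |sortDesc x i - sortDesc x j| =
      (if i < j then sortDesc x i - sortDesc x j else 0) +
      (if j < i then sortDesc x j - sortDesc x i else 0) := by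
    intro i j
    rcases lt_trichotomy i j with h | h | h
    · rw [if_pos h, if_neg (asymm h), add_zero, abs_of_nonneg (by have := hanti h.le; omega)]
    · subst h; simp
    · rw [if_neg (asymm h), if_pos h, zero_add, abs_of_nonpos (by have := hanti h.le; omega)]
      ring
  have h1 : ∑ i : Fin n, ∑ j : Fin n, |sortDesc x i - sortDesc x j| = 2 * kappa x := by
    simp_rw [key, Finset.sum_add_distrib]
    have h2 : (∑ i : Fin n, ∑ j : Fin n, if j < i then sortDesc x j - sortDesc x i else 0)
        = kappa x := by
      rw [Finset.sum_comm]; rfl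
    rw [h2]
    unfold kappa
    ring
  have hcomp : ∀ i, sortDesc x i = x ((Fin.revPerm.trans (Tuple.sort x)) i) := fun _ => rfl
  set e := Fin.revPerm.trans (Tuple.sort x) with he
  calc 2 * kappa x = ∑ i : Fin n, ∑ j : Fin n, |sortDesc x i - sortDesc x j| := h1.symm
    _ = ∑ i : Fin n, ∑ j : Fin n, |x (e i) - x (e j)| := by simp_rw [hcomp]
    _ = ∑ i : Fin n, ∑ j : Fin n, |x (e i) - x j| :=
        Finset.sum_congr rfl fun i _ => Equiv.sum_comp e fun j => |x (e i) - x j|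
    _ = ∑ i : Fin n, ∑ j : Fin n, |x i - x j| := Equiv.sum_comp e fun i => ∑ j, |x i - x j|

/-- A strictly balancing interchange strictly decreases the imbalance index,
by exactly 2(s-l). -/
theorem stmt5 {L : ℕ} (x : Fin (L + 1) → ℤ) (f t : Fin (L + 1)) (hft : f ≠ t)
    (h2 : x t + 2 ≤ x f)
    (x' : Fin (L + 1) → ℤ)
    (hx' : x' = fun k => if k = f then x f - 1 else if k = t then x t + 1 else x k)
    (l s : Fin (L + 1)) (hls : l < s)
    (hyl : sortDesc x l = x f) (hys : sortDesc x s = x t)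
    (hl : ∀ a, l < a → sortDesc x a < sortDesc x l)
    (hs : ∀ b, b < s → sortDesc x s < sortDesc x b) :
    kappa x' = kappa x - 2 * ((s : ℤ) - (l : ℤ)) ∧ kappa x' < kappa x := by
  have hL : 1 ≤ L := by
    rcases Nat.eq_zero_or_pos L with h | h
    · subst h
      have h1 := f.isLt
      have h2 := t.isLt
      exact absurd (Fin.ext (by omega)) hft
    · exact h
  have hanti := sortDesc_anti x
  have hcomp : ∀ i, sortDesc x i = x ((Fin.revPerm.trans (Tuple.sort x)) i) := fun _ => rfl
  set e := Fin.revPerm.trans (Tuple.sort x) with he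
  -- counting lemmas
  have cf : ∑ j : Fin (L+1), (if x f ≤ x j then (1:ℤ) else 0) = (l : ℤ) + 1 := by
    rw [← Equiv.sum_comp e fun j => if x f ≤ x j then (1:ℤ) else 0]
    have step : ∀ i : Fin (L+1),
        (if x f ≤ x (e i) then (1:ℤ) else 0) = if i ≤ l then 1 else 0 := by
      intro i
      rw [← hcomp i]
      rcases le_or_gt i l with h | h
      · rw [if_pos h, if_pos (by rw [← hyl]; exact hanti h)]
      · rw [if_neg (not_le.mpr h), if_neg (not_le.mpr (by rw [← hyl]; exact hl i h))]
    simp_rw [step]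
    rw [Finset.sum_boole]
    have hfil : Finset.filter (fun i => i ≤ l) Finset.univ = Finset.Iic l := by
      ext i; simp
    rw [hfil, Fin.card_Iic]
    push_cast
    ring
  have cs : ∑ j : Fin (L+1), (if x t < x j then (1:ℤ) else 0) = (s : ℤ) := by
    rw [← Equiv.sum_comp e fun j => if x t < x j then (1:ℤ) else 0]
    have step : ∀ i : Fin (L+1),
        (if x t < x (e i) then (1:ℤ) else 0) = if i < s then 1 else 0 := by
      intro i
      rw [← hcomp i]
      rcases lt_or_ge i s with h | h
      · rw [if_pos h, if_pos (by rw [← hys]; exact hs i h)]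
      · rw [if_neg (not_lt.mpr h), if_neg (not_lt.mpr (by rw [← hys]; exact hanti h))]
    simp_rw [step]
    rw [Finset.sum_boole]
    have hfil : Finset.filter (fun i => i < s) Finset.univ = Finset.Iio s := by
      ext i; simp
    rw [hfil, Fin.card_Iio]
  have htf : t ≠ f := Ne.symm hft
  have htmem : t ∈ Finset.univ.erase f := Finset.mem_erase.mpr ⟨htf, Finset.mem_univ t⟩
  set E := (Finset.univ.erase f).erase t with hE
  have split : ∀ g : Fin (L+1) → ℤ, ∑ j, g j = g f + (g t + ∑ j ∈ E, g j) := by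
    intro g
    rw [← Finset.add_sum_erase _ g (Finset.mem_univ f), ← Finset.add_sum_erase _ g htmem]
  have hEne : ∀ j ∈ E, j ≠ f ∧ j ≠ t := by
    intro j hj
    rw [hE, Finset.mem_erase, Finset.mem_erase] at hj
    exact ⟨hj.2.1, hj.1⟩
  have hxf : x' f = x f - 1 := by rw [hx']; simp
  have hxt : x' t = x t + 1 := by rw [hx']; simp [htf]
  have hxE : ∀ j ∈ E, x' j = x j := by
    intro j hj
    obtain ⟨h1, h2'⟩ := hEne j hj
    rw [hx']; simp [h1, h2']
  have hC : (E.card : ℤ) = (L : ℤ) - 1 := by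
    rw [hE, Finset.card_erase_of_mem htmem, Finset.card_erase_of_mem (Finset.mem_univ f),
      Finset.card_univ, Fintype.card_fin]
    omega
  have hA : ∑ j ∈ E, (if x f ≤ x j then (1:ℤ) else 0) = (l : ℤ) := by
    have h := split (fun j => if x f ≤ x j then (1:ℤ) else 0)
    rw [if_pos le_rfl, if_neg (show ¬ x f ≤ x t by omega)] at h
    linarith [cf]
  have hB : ∑ j ∈ E, (if x t < x j then (1:ℤ) else 0) = (s : ℤ) - 1 := by
    have h := split (fun j => if x t < x j then (1:ℤ) else 0)
    rw [if_pos (show x t < x f by omega), if_neg (lt_irrefl (x t))] at h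
    linarith [cs]
  -- sum pieces
  have P1 : ∑ j ∈ E, |x f - 1 - x j|
      = (∑ j ∈ E, |x f - x j|) + (2 * (l:ℤ) - ((L:ℤ) - 1)) := by
    simp_rw [aux1]
    rw [Finset.sum_add_distrib, Finset.sum_sub_distrib, ← Finset.mul_sum, hA,
      Finset.sum_const, nsmul_eq_mul, mul_one, hC]
  have P2 : ∑ j ∈ E, |x t + 1 - x j|
      = (∑ j ∈ E, |x t - x j|) + (((L:ℤ) - 1) - 2 * ((s:ℤ) - 1)) := by
    simp_rw [aux2]
    rw [Finset.sum_add_distrib, Finset.sum_sub_distrib, ← Finset.mul_sum, hB,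
      Finset.sum_const, nsmul_eq_mul, mul_one, hC]
  have hM : |x f - 1 - (x t + 1)| = |x f - x t| - 2 := by
    rw [abs_of_nonneg (by omega), abs_of_nonneg (by omega)]; ring
  -- rows
  have Lf : ∑ j : Fin (L+1), |x' f - x' j|
      = ((∑ j ∈ E, |x f - x j|) + (2 * (l:ℤ) - ((L:ℤ) - 1))) + (|x f - x t| - 2) := by
    rw [split (fun j => |x' f - x' j|)]
    rw [hxf, hxt]
    have hEq : ∑ j ∈ E, |x f - 1 - x' j| = ∑ j ∈ E, |x f - 1 - x j| :=
      Finset.sum_congr rfl fun j hj => by rw [hxE j hj]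
    rw [hEq, P1, hM, sub_self, abs_zero]
    ring
  have Lt : ∑ j : Fin (L+1), |x' t - x' j|
      = ((∑ j ∈ E, |x t - x j|) + (((L:ℤ) - 1) - 2 * ((s:ℤ) - 1))) + (|x f - x t| - 2) := by
    rw [split (fun j => |x' t - x' j|)]
    rw [hxf, hxt]
    have hEq : ∑ j ∈ E, |x t + 1 - x' j| = ∑ j ∈ E, |x t + 1 - x j| :=
      Finset.sum_congr rfl fun j hj => by rw [hxE j hj]
    rw [hEq, P2, sub_self, abs_zero]
    have : |x t + 1 - (x f - 1)| = |x f - x t| - 2 := by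
      rw [abs_of_nonpos (by omega), abs_of_nonneg (by omega)]; ring
    rw [this]
    ring
  have Li : ∑ i ∈ E, ∑ j : Fin (L+1), |x' i - x' j|
      = ((∑ j ∈ E, |x f - x j|) + (2 * (l:ℤ) - ((L:ℤ) - 1)))
        + (((∑ j ∈ E, |x t - x j|) + (((L:ℤ) - 1) - 2 * ((s:ℤ) - 1)))
        + ∑ i ∈ E, ∑ j ∈ E, |x i - x j|) := by
    have row : ∀ i ∈ E, ∑ j : Fin (L+1), |x' i - x' j|
        = |x f - 1 - x i| + (|x t + 1 - x i| + ∑ j ∈ E, |x i - x j|) := by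
      intro i hi
      rw [split (fun j => |x' i - x' j|)]
      rw [hxf, hxt, hxE i hi]
      have hEq : ∑ j ∈ E, |x i - x' j| = ∑ j ∈ E, |x i - x j| :=
        Finset.sum_congr rfl fun j hj => by rw [hxE j hj]
      rw [hEq, abs_sub_comm (x i) (x f - 1), abs_sub_comm (x i) (x t + 1)]
    rw [Finset.sum_congr rfl row, Finset.sum_add_distrib, Finset.sum_add_distrib, P1, P2]
  have Rf : ∑ j : Fin (L+1), |x f - x j| = (∑ j ∈ E, |x f - x j|) + |x f - x t| := by
    rw [split (fun j => |x f - x j|)]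
    rw [sub_self, abs_zero]
    ring
  have Rt : ∑ j : Fin (L+1), |x t - x j| = (∑ j ∈ E, |x t - x j|) + |x f - x t| := by
    rw [split (fun j => |x t - x j|)]
    rw [sub_self, abs_zero, abs_sub_comm (x t) (x f)]
    ring
  have Ri : ∑ i ∈ E, ∑ j : Fin (L+1), |x i - x j|
      = (∑ j ∈ E, |x f - x j|) + ((∑ j ∈ E, |x t - x j|) + ∑ i ∈ E, ∑ j ∈ E, |x i - x j|) := by
    have row : ∀ i ∈ E, ∑ j : Fin (L+1), |x i - x j|
        = |x f - x i| + (|x t - x i| + ∑ j ∈ E, |x i - x j|) := by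
      intro i hi
      rw [split (fun j => |x i - x j|)]
      rw [abs_sub_comm (x i) (x f), abs_sub_comm (x i) (x t)]
    rw [Finset.sum_congr rfl row, Finset.sum_add_distrib, Finset.sum_add_distrib]
  have main : ∑ i : Fin (L+1), ∑ j : Fin (L+1), |x' i - x' j|
      = (∑ i : Fin (L+1), ∑ j : Fin (L+1), |x i - x j|) + (4 * (l:ℤ) - 4 * (s:ℤ)) := by
    rw [split (fun i => ∑ j, |x' i - x' j|), split (fun i => ∑ j, |x i - x j|)]
    rw [Lf, Lt, Li, Rf, Rt, Ri]
    ring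
  have hk := two_kappa x
  have hk' := two_kappa x'
  have hlt : (l:ℤ) < (s:ℤ) := by exact_mod_cast hls
  constructor
  · linarith
  · linarith
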